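/- Let G be the planar graph with two apex vertices A and B adjacent to each other and to the endpoints of m disjoint edges e₁,...,e_m (each eᵢ = xᵢyᵢ with A and B adjacent to both xᵢ and yᵢ). Assign hatness 2 to A, hatness 3 to B, hatness 13 to each xᵢ and hatness 12 to each yᵢ, with 1 guess everywhere. Then this game is losing; in particular the game ⟨G, constant 13, constant 1⟩ is losing. -/
import Mathlib


/-- A winning strategy in the hat guessing game `⟨G, h, g⟩`: each sage `v` deterministically
outputs at most `g v` guesses depending only on the hat colors of its neighbors, and for
every hat assignment (with `c v < h v`) some sage's guess set contains its own color. -/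
def HatWinning {V : Type*} (G : SimpleGraph V) (h g : V → ℕ) : Prop :=
  ∃ σ : V → (V → ℕ) → Finset ℕ,
    (∀ v c c', (∀ u, G.Adj v u → c u = c' u) → σ v c = σ v c') ∧
    (∀ v c, (σ v c).card ≤ g v) ∧
    ∀ c : V → ℕ, (∀ v, c v < h v) → ∃ v, c v ∈ σ v c

/-- The hat guessing game played by the sages occupying the vertices of `S` only
(the game on the induced subgraph `G[S]`). -/
def HatWinningOn {V : Type*} (G : SimpleGraph V) (S : Set V) (h g : V → ℕ) : Prop :=
  ∃ σ : V → (V → ℕ) → Finset ℕ,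
    (∀ v ∈ S, ∀ c c', (∀ u ∈ S, G.Adj v u → c u = c' u) → σ v c = σ v c') ∧
    (∀ v ∈ S, ∀ c, (σ v c).card ≤ g v) ∧
    ∀ c : V → ℕ, (∀ v ∈ S, c v < h v) → ∃ v ∈ S, c v ∈ σ v c

/-- The graph of Example "alon": two apex vertices `inl 0 = A` and `inl 1 = B` adjacent to each
other and to both endpoints `inr (i, false) = xᵢ`, `inr (i, true) = yᵢ` of `m` disjoint edges
`xᵢyᵢ`. -/
def alonGraph (m : ℕ) : SimpleGraph (Fin 2 ⊕ Fin m × Bool) :=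
  SimpleGraph.fromRel (fun x y =>
    x.isLeft ∨ ∃ (i : Fin m) (b : Bool), x = Sum.inr (i, b) ∧ y = Sum.inr (i, !b))

/-! ### Auxiliary material -/

/-- Neighbors of an edge vertex `inr (i, bb)` in `alonGraph m` are only `A`, `B` and the
other endpoint `inr (i, !bb)`. -/
lemma alon_adj_edge {m : ℕ} (i : Fin m) (u : Fin 2 ⊕ Fin m × Bool) (bb : Bool)
    (h : (alonGraph m).Adj (Sum.inr (i, bb)) u) :
    u = Sum.inl 0 ∨ u = Sum.inl 1 ∨ u = Sum.inr (i, !bb) := by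
  rcases u with j | ⟨j, b'⟩
  · fin_cases j
    · exact Or.inl rfl
    · exact Or.inr (Or.inl rfl)
  · simp only [alonGraph, SimpleGraph.fromRel_adj, Sum.isLeft_inr, false_or,
      Sum.inr.injEq, Prod.mk.injEq] at h
    obtain ⟨hne, h⟩ := h
    right; right
    rcases h with (h | ⟨i', c', ⟨h1, h2⟩, h3, h4⟩) | (h | ⟨i', c', ⟨h1, h2⟩, h3, h4⟩)
    · simp at h
    · subst h1; subst h2; subst h3; subst h4; rfl
    · simp at h
    · subst h1; subst h2; subst h3; subst h4; simp

lemma count_apex (F G : ℕ → ℕ) : ∃ a < 2, ∃ b < 3, F b ≠ a ∧ G a ≠ b := by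
  by_contra hcon
  push_neg at hcon
  have h00 := hcon 0 (by omega) 0 (by omega)
  have h01 := hcon 0 (by omega) 1 (by omega)
  have h02 := hcon 0 (by omega) 2 (by omega)
  have h10 := hcon 1 (by omega) 0 (by omega)
  have h11 := hcon 1 (by omega) 1 (by omega)
  have h12 := hcon 1 (by omega) 2 (by omega)
  omega

lemma count_edge (F G : ℕ → ℕ → ℕ → ℕ) :
    ∃ p < 13, ∃ q < 12, ∀ a < 2, ∀ b < 3, F a b q ≠ p ∧ G a b p ≠ q := by
  classical
  set Bad : Finset (ℕ × ℕ) :=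
    (Finset.range 2 ×ˢ Finset.range 3).biUnion (fun ab =>
      ((Finset.range 12).image (fun q => (F ab.1 ab.2 q, q))) ∪
      ((Finset.range 13).image (fun p => (p, G ab.1 ab.2 p)))) with hBadDef
  have hcard : Bad.card ≤ 150 := by
    have h1 : ∀ ab ∈ Finset.range 2 ×ˢ Finset.range 3,
        (((Finset.range 12).image (fun q => (F ab.1 ab.2 q, q))) ∪
         ((Finset.range 13).image (fun p => (p, G ab.1 ab.2 p)))).card ≤ 25 := by
      intro ab _
      refine le_trans (Finset.card_union_le _ _) ?_
      have hu := Finset.card_image_le (s := Finset.range 12) (f := fun q => (F ab.1 ab.2 q, q))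
      have hv := Finset.card_image_le (s := Finset.range 13) (f := fun p => (p, G ab.1 ab.2 p))
      simp only [Finset.card_range] at hu hv
      omega
    calc Bad.card ≤ _ := Finset.card_biUnion_le
      _ ≤ ∑ _ab ∈ Finset.range 2 ×ˢ Finset.range 3, 25 := Finset.sum_le_sum h1
      _ = 150 := by simp
  have hsub : ¬ (Finset.range 13 ×ˢ Finset.range 12 ⊆ Bad) := by
    intro hsub
    have := Finset.card_le_card hsub
    simp [Finset.card_product] at this
    omega
  obtain ⟨pq, hmem, hnot⟩ := Finset.not_subset.mp hsub
  obtain ⟨p, q⟩ := pq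
  rw [Finset.mem_product, Finset.mem_range, Finset.mem_range] at hmem
  refine ⟨p, hmem.1, q, hmem.2, fun a ha b hb => ⟨fun hF => hnot ?_, fun hG => hnot ?_⟩⟩
  · rw [hBadDef, Finset.mem_biUnion]
    exact ⟨(a, b), by simp [ha, hb], Finset.mem_union_left _
      (Finset.mem_image.mpr ⟨q, Finset.mem_range.mpr hmem.2, by simp [hF]⟩)⟩
  · rw [hBadDef, Finset.mem_biUnion]
    exact ⟨(a, b), by simp [ha, hb], Finset.mem_union_right _
      (Finset.mem_image.mpr ⟨p, Finset.mem_range.mpr hmem.1, by simp [hG]⟩)⟩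

lemma eq_sup_of_mem (s : Finset ℕ) (a : ℕ) (ha : a ∈ s) (h : s.card ≤ 1) : a = s.sup id := by
  have hs : s = {a} := Finset.eq_singleton_iff_unique_mem.mpr
    ⟨ha, fun b hb => Finset.card_le_one.mp h b hb a ha⟩
  simp [hs]

/-- A coloring of `alonGraph m` with color `a` on `A`, `b` on `B`, `P i` on `xᵢ`, `Q i` on `yᵢ`. -/
def alonCol (m : ℕ) (a b : ℕ) (P Q : Fin m → ℕ) : (Fin 2 ⊕ Fin m × Bool) → ℕ
  | Sum.inl j => if j = 0 then a else b
  | Sum.inr (i, false) => P i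
  | Sum.inr (i, true) => Q i

/-- The single-guess game on `alonGraph m` with hatness 2 at `A`, 3 at `B`,
13 at each `xᵢ` and 12 at each `yᵢ` is losing; in particular the game with constant hatness 13
is losing. -/
theorem alon_graph_losing (m : ℕ) :
    (¬ HatWinning (alonGraph m)
        (fun x => match x with
          | Sum.inl 0 => 2
          | Sum.inl 1 => 3
          | Sum.inr (_, false) => 13
          | Sum.inr (_, true) => 12)
        (fun _ => 1)) ∧
    ¬ HatWinning (alonGraph m) (fun _ => 13) (fun _ => 1) := by
  have main : ¬ HatWinning (alonGraph m)
      (fun x => match x with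
        | Sum.inl 0 => 2
        | Sum.inl 1 => 3
        | Sum.inr (_, false) => 13
        | Sum.inr (_, true) => 12)
      (fun _ => 1) := by
    rintro ⟨σ, hloc, hcard, hwin⟩
    classical
    -- Step 1: for each edge choose a pair of colors that no endpoint ever guesses,
    -- whatever the colors of A and B are.
    have hedge : ∀ i : Fin m, ∃ p < 13, ∃ q < 12, ∀ a < 2, ∀ b < 3,
        (σ (Sum.inr (i, false)) (alonCol m a b (fun _ => 0) (fun _ => q))).sup id ≠ p ∧
        (σ (Sum.inr (i, true)) (alonCol m a b (fun _ => p) (fun _ => 0))).sup id ≠ q :=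
      fun i => count_edge _ _
    choose P hP Q hQ hgood using hedge
    -- Step 2: choose colors for A and B fooling both of them.
    obtain ⟨a, ha, b, hb, hA, hB⟩ := count_apex
      (fun b' => (σ (Sum.inl 0) (alonCol m 0 b' P Q)).sup id)
      (fun a' => (σ (Sum.inl 1) (alonCol m a' 0 P Q)).sup id)
    set c := alonCol m a b P Q with hcdef
    have hcb : ∀ v, c v < (fun x : Fin 2 ⊕ Fin m × Bool => match x with
        | Sum.inl 0 => 2
        | Sum.inl 1 => 3
        | Sum.inr (_, false) => 13
        | Sum.inr (_, true) => 12) v := by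
      rintro (j | ⟨i, bb⟩)
      · fin_cases j
        · simpa [alonCol, hcdef] using ha
        · simpa [alonCol, hcdef] using hb
      · cases bb
        · simpa [alonCol, hcdef] using hP i
        · simpa [alonCol, hcdef] using hQ i
    obtain ⟨v, hv⟩ := hwin c hcb
    rcases v with j | ⟨i, bb⟩
    · by_cases hj : j = 0
      case pos =>
        subst hj
        -- sage A does not guess its color
        have hl : σ (Sum.inl 0) c = σ (Sum.inl 0) (alonCol m 0 b P Q) := by
          apply hloc
          intro u hu
          rcases u with j' | ⟨i', b'⟩
          · have hne : j' ≠ 0 := by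
              intro h; exact hu.ne' (by rw [h])
            simp [hcdef, alonCol, hne]
          · rw [hcdef]; cases b' <;> rfl
        rw [show c (Sum.inl 0) = a by simp [hcdef, alonCol], hl] at hv
        exact hA (eq_sup_of_mem _ _ hv (hcard _ _)).symm
      case neg =>
        have hj1 : j = 1 := by
          fin_cases j
          · exact absurd rfl hj
          · rfl
        subst hj1
        -- sage B does not guess its color
        have hl : σ (Sum.inl 1) c = σ (Sum.inl 1) (alonCol m a 0 P Q) := by
          apply hloc
          intro u hu
          rcases u with j' | ⟨i', b'⟩
          · have hne : j' = 0 := by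
              have : j' ≠ 1 := by intro h; exact hu.ne' (by rw [h])
              omega
            simp [hcdef, alonCol, hne]
          · rw [hcdef]; cases b' <;> rfl
        rw [show c (Sum.inl 1) = b by simp [hcdef, alonCol], hl] at hv
        exact hB (eq_sup_of_mem _ _ hv (hcard _ _)).symm
    · cases bb
      · -- sage xᵢ does not guess its color
        have hl : σ (Sum.inr (i, false)) c
            = σ (Sum.inr (i, false)) (alonCol m a b (fun _ => 0) (fun _ => Q i)) := by
          apply hloc
          intro u hu
          rcases alon_adj_edge i u false hu with h | h | h <;> subst h <;>
            simp [hcdef, alonCol]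
        rw [show c (Sum.inr (i, false)) = P i by simp [hcdef, alonCol], hl] at hv
        exact ((hgood i a ha b hb).1) (eq_sup_of_mem _ _ hv (hcard _ _)).symm
      · -- sage yᵢ does not guess its color
        have hl : σ (Sum.inr (i, true)) c
            = σ (Sum.inr (i, true)) (alonCol m a b (fun _ => P i) (fun _ => 0)) := by
          apply hloc
          intro u hu
          rcases alon_adj_edge i u true hu with h | h | h <;> subst h <;>
            simp [hcdef, alonCol]
        rw [show c (Sum.inr (i, true)) = Q i by simp [hcdef, alonCol], hl] at hv
        exact ((hgood i a ha b hb).2) (eq_sup_of_mem _ _ hv (hcard _ _)).symm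
  refine ⟨main, fun ⟨σ, h1, h2, h3⟩ => main ⟨σ, h1, h2, fun c hc => h3 c fun v => ?_⟩⟩
  refine lt_of_lt_of_le (hc v) ?_
  rcases v with j | ⟨i, bb⟩
  · fin_cases j <;> norm_num
  · cases bb <;> norm_num
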